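/- arXiv:2004.14310 — 4 statements merged into one kernel-verified Lean document; each statement's English description precedes it below -/
import Mathlib

section
/- Let M be a pointed metric space with base point 0, let h : M → ℝ be a Lipschitz function with bounded support, and let f : M → ℝ be Lipschitz with f(0) = 0. Then the product f·h is Lipschitz with f·h vanishing at 0, and Lip(f·h) ≤ Lip(f)·(‖h‖_∞ + rad(supp h)·Lip(h)), where rad(A) = sup_{a∈A} d(0,a). -/
open Filter Metric Topology NNReal

variable {M : Type*} [MetricSpace M]

/-- If `h` is Lipschitz with bounded support and `f` is Lipschitz with
`f(0) = 0`, then `f·h` vanishes at `0` and is Lipschitz with constant at most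
`Lip(f)·(‖h‖_∞ + rad(supp h)·Lip(h))`. -/
theorem weighting_operator_bound (base : M) (f h : M → ℝ) (Kf Kh C R : ℝ≥0)
    (hf : LipschitzWith Kf f) (hf0 : f base = 0)
    (hh : LipschitzWith Kh h)
    (hC : ∀ x, |h x| ≤ C)
    (hR : ∀ x, h x ≠ 0 → dist base x ≤ R) :
    (f * h) base = 0 ∧ LipschitzWith (Kf * (C + R * Kh)) (f * h) := by
  refine ⟨by simp [hf0], ?_⟩
  rw [lipschitzWith_iff_dist_le_mul]
  have key : ∀ x y : M, h x ≠ 0 →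
      dist ((f * h) x) ((f * h) y) ≤ ↑(Kf * (C + R * Kh)) * dist x y := by
    intro x y hx
    have hfx : |f x| ≤ (Kf : ℝ) * R := by
      calc |f x| = dist (f x) (f base) := by simp [hf0, Real.dist_eq]
        _ ≤ Kf * dist x base := hf.dist_le_mul x base
        _ ≤ (Kf : ℝ) * R := by
            have hd := hR x hx
            rw [dist_comm] at hd
            exact mul_le_mul_of_nonneg_left hd Kf.coe_nonneg
    have h1 : |h x - h y| ≤ (Kh : ℝ) * dist x y := by
      simpa [Real.dist_eq] using hh.dist_le_mul x y
    have h2 : |f x - f y| ≤ (Kf : ℝ) * dist x y := by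
      simpa [Real.dist_eq] using hf.dist_le_mul x y
    have heq : f x * h x - f y * h y = f x * (h x - h y) + h y * (f x - f y) := by ring
    simp only [Pi.mul_apply, Real.dist_eq, heq]
    calc |f x * (h x - h y) + h y * (f x - f y)|
        ≤ |f x * (h x - h y)| + |h y * (f x - f y)| := abs_add_le _ _
      _ = |f x| * |h x - h y| + |h y| * |f x - f y| := by rw [abs_mul, abs_mul]
      _ ≤ ((Kf : ℝ) * R) * ((Kh : ℝ) * dist x y) + (C : ℝ) * ((Kf : ℝ) * dist x y) := by
          refine add_le_add (mul_le_mul hfx h1 (abs_nonneg _) (by positivity))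
            (mul_le_mul (hC y) h2 (abs_nonneg _) C.coe_nonneg)
      _ = ↑(Kf * (C + R * Kh)) * dist x y := by push_cast; ring
  intro x y
  by_cases hx : h x = 0
  · by_cases hy : h y = 0
    · simp only [Pi.mul_apply, hx, hy, mul_zero, dist_self]
      positivity
    · rw [dist_comm, dist_comm x y]
      exact key y x hy
  · exact key x y hx
end

section
/- Let F be a finite set of integers such that any two distinct elements of F differ by at least 3. For each n ∈ F let f_n : M → ℝ be Lipschitz with Lipschitz constant at most 1 and f_n(0) = 0. Then the function g = Σ_{n∈F} f_n·Λ_n is Lipschitz with Lipschitz constant at most 15. -/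
/-!
On the support of `Λ_n` we have `d(x,0) < 2^(n+1)`, so `|f_n| ≤ 2^(n+1)` there, while `Λ_n` is
`2^(1-n)`-Lipschitz and bounded by `1`; the product rule then makes each `f_n Λ_n`
`(1 + 2^(n+1) 2^(1-n)) = 5`-Lipschitz. The separation of `F` makes the supports of the `Λ_n`
pairwise disjoint, so for any two points `x, y` at most two terms of the sum change between them,
and `g` is `10`-Lipschitz.
-/

open Filter Metric Topology NNReal


variable {M : Type*} [MetricSpace M]

/-- The "tent" function `Λ_n`, supported on the annulus `2^(n-1) < d(x,0) < 2^(n+1)`,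
equal to `1` on the sphere `d(x,0) = 2^n` and affine in `d(x,0)` in between. -/
noncomputable def Lam (base : M) (n : ℤ) (x : M) : ℝ :=
  max 0 (min ((2:ℝ) ^ (1 - n) * dist x base - 1) (2 - (2:ℝ) ^ (-n) * dist x base))

/-- The "plateau" function `Π_n`, equal to `1` on the annulus `2^(-n) ≤ d(x,0) ≤ 2^n`,
vanishing for `d(x,0) ≤ 2^(-(n+1))` and `d(x,0) ≥ 2^(n+1)`, affine in between. -/
noncomputable def Pla (base : M) (n : ℕ) (x : M) : ℝ :=
  max 0 (min 1 (min ((2:ℝ) ^ ((n:ℤ) + 1) * dist x base - 1)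
    (2 - (2:ℝ) ^ (-(n:ℤ)) * dist x base)))

/-- The cutoff function `h_n`, equal to `1` on the ball `d(x,0) ≤ 2^n`, vanishing for
`d(x,0) ≥ 2^(n+1)`, and affine in `d(x,0)` in between. -/
noncomputable def hfun (base : M) (n : ℤ) (x : M) : ℝ :=
  max 0 (min 1 (2 - (2:ℝ) ^ (-n) * dist x base))

open Finset Function

theorem LipschitzWith.finset_sum_of_pairwiseDisjoint_support {ι α E : Type*} [PseudoMetricSpace α]
    [SeminormedAddCommGroup E] {s : Finset ι} {φ : ι → α → E} {K : ℝ≥0}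
    (hφ : ∀ i ∈ s, LipschitzWith K (φ i))
    (hdisj : (s : Set ι).PairwiseDisjoint fun i => support (φ i)) :
    LipschitzWith (2 * K) fun x => ∑ i ∈ s, φ i x := by
  classical
  have hcard (x : α) : #{i ∈ s | φ i x ≠ 0} ≤ 1 :=
    card_le_one.2 fun i hi j hj => by
      rw [mem_filter] at hi hj
      by_contra hij
      exact Set.disjoint_left.1 (hdisj hi.1 hj.1 hij) hi.2 hj.2
  refine .of_dist_le_mul fun x y => ?_
  have hsupp : ∀ i ∈ s, φ i x - φ i y ≠ 0 → φ i x ≠ 0 ∨ φ i y ≠ 0 := fun i _ h => by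
    by_contra! h'
    simp [h'] at h
  calc dist (∑ i ∈ s, φ i x) (∑ i ∈ s, φ i y)
      = ‖∑ i ∈ s with φ i x ≠ 0 ∨ φ i y ≠ 0, (φ i x - φ i y)‖ := by
        rw [dist_eq_norm, ← sum_sub_distrib, sum_filter_of_ne hsupp]
    _ ≤ ∑ i ∈ s with φ i x ≠ 0 ∨ φ i y ≠ 0, K * dist x y :=
        (norm_sum_le _ _).trans <| sum_le_sum fun i hi => by
          rw [← dist_eq_norm]; exact (hφ i (mem_filter.1 hi).1).dist_le_mul x y
    _ = #{i ∈ s | φ i x ≠ 0 ∨ φ i y ≠ 0} * (K * dist x y) := by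
        rw [sum_const, nsmul_eq_mul]
    _ ≤ 2 * (K * dist x y) := by
        gcongr
        rw [filter_or]
        exact_mod_cast (card_union_le _ _).trans (add_le_add (hcard x) (hcard y))
    _ = ↑(2 * K) * dist x y := by push_cast; ring

theorem LipschitzWith.mul_of_support_subset_closedBall {α : Type*} [PseudoMetricSpace α]
    {f g : α → ℝ} {x₀ : α} {L K R : ℝ≥0}
    (hf : LipschitzWith L f) (hf₀ : f x₀ = 0) (hg : LipschitzWith K g) (hg₁ : ∀ x, |g x| ≤ 1)
    (hgR : support g ⊆ closedBall x₀ R) :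
    LipschitzWith (L * (1 + R * K)) fun x => f x * g x := by
  have key (x y : α) (hy : g y ≠ 0) :
      |f x * g x - f y * g y| ≤ L * (1 + R * K) * dist x y := by
    have hfy : |f y| ≤ L * R := by
      simpa [hf₀, Real.dist_eq] using
        hf.dist_le_mul y x₀ |>.trans (by gcongr; exact hgR hy)
    have hfxy : |f x - f y| ≤ L * dist x y := by simpa [Real.dist_eq] using hf.dist_le_mul x y
    have hgxy : |g x - g y| ≤ K * dist x y := by simpa [Real.dist_eq] using hg.dist_le_mul x y
    calc |f x * g x - f y * g y| = |(f x - f y) * g x + f y * (g x - g y)| := by congr 1; ring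
      _ ≤ |f x - f y| * |g x| + |f y| * |g x - g y| := by
        rw [← abs_mul, ← abs_mul]; exact abs_add_le _ _
      _ ≤ L * dist x y * 1 + L * R * (K * dist x y) := by
        gcongr; exact hg₁ x
      _ = L * (1 + R * K) * dist x y := by ring
  refine .of_dist_le_mul fun x y => ?_
  rw [Real.dist_eq]
  by_cases hy : g y = 0
  · by_cases hx : g x = 0
    · simp only [hx, hy, mul_zero, sub_zero, abs_zero]; positivity
    · rw [abs_sub_comm, dist_comm]; exact key y x hx
  · exact key x y hy

section Tent

variable (base : M) (n : ℤ)

theorem lam_nonneg (x : M) : 0 ≤ Lam base n x := le_max_left _ _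

theorem lam_le_one (x : M) : Lam base n x ≤ 1 := by
  refine max_le zero_le_one ?_
  have h : (2:ℝ) ^ (1 - n) = 2 * 2 ^ (-n) := by
    rw [sub_eq_add_neg, zpow_add₀ two_ne_zero, zpow_one]
  rw [h]
  -- the two affine pieces cross at height `1`
  rcases le_total ((2:ℝ) ^ (-n) * dist x base) 1 with hd | hd
  · exact (min_le_left _ _).trans (by linarith)
  · exact (min_le_right _ _).trans (by linarith)

theorem abs_lam_le_one (x : M) : |Lam base n x| ≤ 1 :=
  (abs_of_nonneg (lam_nonneg base n x)).trans_le (lam_le_one base n x)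

theorem lipschitzWith_lam : LipschitzWith (2 ^ (1 - n)) (Lam base n) := by
  have hrise : LipschitzWith (2 ^ (1 - n)) fun x => (2:ℝ) ^ (1 - n) * dist x base - 1 :=
    .of_le_add_mul _ fun x y => by
      push_cast
      nlinarith [dist_triangle x y base, (by positivity : (0:ℝ) < 2 ^ (1 - n))]
  have hfall : LipschitzWith (2 ^ (-n)) fun x => 2 - (2:ℝ) ^ (-n) * dist x base :=
    .of_le_add_mul _ fun x y => by
      push_cast
      nlinarith [dist_triangle y x base, dist_comm x y, (by positivity : (0:ℝ) < 2 ^ (-n))]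
  have hle : (2:ℝ≥0) ^ (-n) ≤ 2 ^ (1 - n) := zpow_le_zpow_right₀ one_le_two (by omega)
  exact ((hrise.min hfall).const_max 0).weaken (max_le le_rfl hle)

theorem dist_mem_Ioo_of_lam_ne_zero {x : M} (h : Lam base n x ≠ 0) :
    dist x base ∈ Set.Ioo ((2:ℝ) ^ (n - 1)) (2 ^ (n + 1)) := by
  have hpos : 0 < min ((2:ℝ) ^ (1 - n) * dist x base - 1) (2 - (2:ℝ) ^ (-n) * dist x base) :=
    lt_of_not_ge fun hc => h (max_eq_left hc)
  rw [lt_min_iff, sub_pos, sub_pos, ← neg_sub, zpow_neg, zpow_neg,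
    lt_inv_mul_iff₀ (by positivity), inv_mul_lt_iff₀ (by positivity)] at hpos
  rw [zpow_add_one₀ two_ne_zero]
  exact ⟨by simpa using hpos.1, by linarith [hpos.2]⟩

theorem disjoint_support_lam {m : ℤ} (h : 3 ≤ |m - n|) :
    Disjoint (support (Lam base m)) (support (Lam base n)) := by
  refine Set.disjoint_left.2 fun x hm hn => ?_
  obtain ⟨hm₁, hm₂⟩ := dist_mem_Ioo_of_lam_ne_zero base m hm
  obtain ⟨hn₁, hn₂⟩ := dist_mem_Ioo_of_lam_ne_zero base n hn
  rcases le_abs.1 h with h | h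
  · linarith [zpow_le_zpow_right₀ (one_le_two : (1:ℝ) ≤ 2) (show n + 1 ≤ m - 1 by omega)]
  · linarith [zpow_le_zpow_right₀ (one_le_two : (1:ℝ) ≤ 2) (show m + 1 ≤ n - 1 by omega)]

end Tent

/-- if the elements of the finite set `F ⊆ ℤ` pairwise differ by at least
`3` and each `f_n` is `1`-Lipschitz with `f_n(0) = 0`, then `g = Σ_{n∈F} f_n·Λ_n` is
Lipschitz with constant at most `15`. -/
theorem sum_tent_lipschitz (base : M) (F : Finset ℤ)
    (hsep : ∀ m ∈ F, ∀ n ∈ F, m ≠ n → 3 ≤ |m - n|)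
    (f : ℤ → M → ℝ)
    (hf : ∀ n ∈ F, LipschitzWith 1 (f n))
    (hf0 : ∀ n ∈ F, f n base = 0) :
    LipschitzWith 15 (fun x => ∑ n ∈ F, f n x * Lam base n x) := by
  have hterm (n : ℤ) (hn : n ∈ F) : LipschitzWith 5 fun x => f n x * Lam base n x := by
    have hR : support (Lam base n) ⊆ closedBall base (2 ^ (n + 1) : ℝ≥0) := fun x hx => by
      simpa using (dist_mem_Ioo_of_lam_ne_zero base n hx).2.le
    have hconst : (1:ℝ≥0) * (1 + 2 ^ (n + 1) * 2 ^ (1 - n)) = 5 := by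
      rw [← zpow_add₀ two_ne_zero, show n + 1 + (1 - n) = 2 by ring]; norm_num
    simpa only [hconst] using (hf n hn).mul_of_support_subset_closedBall (hf0 n hn)
      (lipschitzWith_lam base n) (abs_lam_le_one base n) hR
  have hdisj : (F : Set ℤ).PairwiseDisjoint fun n => support fun x => f n x * Lam base n x :=
    fun m hm n hn hmn => (disjoint_support_lam base n (hsep m hm n hn hmn)).mono
      (support_mul_subset_right _ _) (support_mul_subset_right _ _)
  exact (LipschitzWith.finset_sum_of_pairwiseDisjoint_support hterm hdisj).weaken (by norm_num)
end

section
/- For every f ∈ Lip_0(M) and every x ∈ M, the sequence (Π_n(x)·f⁺(x))_{n∈ℕ} is nondecreasing in n and converges to f⁺(x), where f⁺ = max(f,0). Moreover Lip(Π_n·f) ≤ 12·Lip(f) for all n. -/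
open Filter Metric Topology NNReal


variable {M : Type*} [MetricSpace M]

/-!
Write `Π_n = (1 - h_{-(n+1)}) · h_n`. Multiplying a `K`-Lipschitz `F` by an `L`-Lipschitz weight
`w` with `|w| ≤ 1` gives a `(K + L·C)`-Lipschitz function as soon as `|F| ≤ C` wherever `w` leaves
its plateau value. On the support of `h_n` we have `|f| ≤ K·2^(n+1)`, and `h_n` is
`2^(-n)`-Lipschitz; where `1 - h_{-(n+1)} ≠ 1` we have `|h_n f| ≤ K·2^(-n)`, and this weight is
`2^(n+1)`-Lipschitz. Each factor costs `2K`, so `Lip(Π_n f) ≤ 5K`. Monotonicity in `n` is read off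
the affine pieces, and `Π_n(x) = 1` as soon as `2^(-n) ≤ d(x,0) ≤ 2^n`, while `f⁺(0) = 0`.
-/

theorem LipschitzWith.mul_of_abs_le_off_level {α : Type*} [PseudoMetricSpace α] {w F : α → ℝ}
    {L K C : ℝ≥0} (c : ℝ) (hw : LipschitzWith L w) (hw1 : ∀ x, |w x| ≤ 1)
    (hF : LipschitzWith K F) (hFC : ∀ x, w x ≠ c → |F x| ≤ C) :
    LipschitzWith (K + L * C) fun x => w x * F x := by
  have dist_le : ∀ x y, |F y| ≤ C ∨ w x = w y →
      dist (w x * F x) (w y * F y) ≤ (K + L * C) * dist x y := by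
    intro x y h
    have hw' : |w x - w y| ≤ L * dist x y := by simpa [Real.dist_eq] using hw.dist_le_mul x y
    have hF' : |F x - F y| ≤ K * dist x y := by simpa [Real.dist_eq] using hF.dist_le_mul x y
    have hFy : |F y| * |w x - w y| ≤ C * (L * dist x y) := by
      rcases h with h | h
      · exact mul_le_mul h hw' (abs_nonneg _) C.coe_nonneg
      · simp only [h, sub_self, abs_zero, mul_zero]; positivity
    calc dist (w x * F x) (w y * F y) = |w x * (F x - F y) + F y * (w x - w y)| := by
          rw [Real.dist_eq]; ring_nf
      _ ≤ |w x| * |F x - F y| + |F y| * |w x - w y| := by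
          rw [← abs_mul, ← abs_mul]; exact abs_add_le _ _
      _ ≤ 1 * (K * dist x y) + C * (L * dist x y) := by
          gcongr
          · exact hw1 x
      _ = (K + L * C) * dist x y := by ring
  refine LipschitzWith.of_dist_le_mul fun x y => ?_
  -- expand the product around a point where `w ≠ c`, so that `|F| ≤ C` there
  by_cases hy : w y = c
  · by_cases hx : w x = c
    · exact dist_le x y (Or.inr (hx.trans hy.symm))
    · rw [dist_comm, dist_comm x]; exact dist_le y x (Or.inl (hFC x hx))
  · exact dist_le x y (Or.inl (hFC y hy))

lemma one_sub_max_zero_min_one (u : ℝ) : 1 - max 0 (min 1 u) = max 0 (min 1 (1 - u)) := by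
  simp only [max_def, min_def]; split_ifs <;> linarith

lemma max_zero_min_one_min (a b : ℝ) (h : 1 ≤ a ∨ 1 ≤ b) :
    max 0 (min 1 (min a b)) = max 0 (min 1 a) * max 0 (min 1 b) := by
  rcases h with h | h
  · rw [← min_assoc, min_eq_left h, max_eq_right zero_le_one, one_mul]
  · rw [min_comm a, ← min_assoc, min_eq_left h, max_eq_right zero_le_one, mul_one]

section Cutoffs

variable (base : M)

lemma hfun_nonneg (n : ℤ) (x : M) : 0 ≤ hfun base n x := le_max_left _ _

lemma hfun_le_one (n : ℤ) (x : M) : hfun base n x ≤ 1 := max_le zero_le_one (min_le_left _ _)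

lemma lipschitzWith_hfun (n : ℤ) : LipschitzWith ((2 : ℝ≥0) ^ (-n)) (hfun base n) := by
  have affine : LipschitzWith ((2 : ℝ≥0) ^ (-n)) fun x => 2 - (2:ℝ) ^ (-n) * dist x base :=
    LipschitzWith.of_dist_le_mul fun x y => by
      rw [Real.dist_eq, sub_sub_sub_cancel_left, ← mul_sub, abs_mul, abs_of_pos (by positivity),
        abs_sub_comm]
      push_cast
      gcongr
      exact abs_dist_sub_le x y base
  exact (affine.const_min 1).const_max 0

lemma dist_lt_of_hfun_ne_zero {n : ℤ} {x : M} (hx : hfun base n x ≠ 0) :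
    dist x base < 2 ^ (n + 1) := by
  have hpos : 0 < 2 - (2:ℝ) ^ (-n) * dist x base := by
    by_contra! h
    exact hx (max_eq_left (min_le_of_right_le h))
  rw [zpow_neg, ← div_eq_inv_mul, sub_pos, div_lt_iff₀ (by positivity)] at hpos
  rwa [zpow_add_one₀ two_ne_zero, mul_comm]

lemma Pla_eq_mul_hfun (n : ℕ) (x : M) :
    Pla base n x = (1 - hfun base (-((n:ℤ) + 1)) x) * hfun base n x := by
  rw [hfun, hfun, one_sub_max_zero_min_one, neg_neg,
    show ∀ a : ℝ, 1 - (2 - a) = a - 1 from fun a => by ring, Pla]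
  apply max_zero_min_one_min
  by_contra! h
  obtain ⟨hA, hB⟩ := h
  rw [zpow_add_one₀ two_ne_zero, zpow_natCast] at hA
  rw [zpow_neg, zpow_natCast, ← div_eq_inv_mul, sub_lt_comm, lt_div_iff₀ (by positivity)] at hB
  have : 1 ≤ (2:ℝ) ^ n := one_le_pow₀ one_le_two
  nlinarith

lemma abs_hfun_le_one (n : ℤ) (x : M) : |hfun base n x| ≤ 1 :=
  abs_le.2 ⟨by linarith [hfun_nonneg base n x], hfun_le_one base n x⟩

lemma abs_one_sub_hfun_le_one (n : ℤ) (x : M) : |1 - hfun base n x| ≤ 1 :=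
  abs_le.2 ⟨by linarith [hfun_le_one base n x], by linarith [hfun_nonneg base n x]⟩

lemma lipschitzWith_one_sub_hfun (n : ℤ) :
    LipschitzWith ((2 : ℝ≥0) ^ (-n)) fun x => 1 - hfun base n x :=
  LipschitzWith.of_dist_le_mul fun x y => by
    rw [dist_sub_left]; exact (lipschitzWith_hfun base n).dist_le_mul x y

lemma monotone_Pla (x : M) : Monotone fun n : ℕ => Pla base n x := by
  intro m n hmn
  have hA : (2:ℝ) ^ ((m:ℤ) + 1) * dist x base - 1 ≤ (2:ℝ) ^ ((n:ℤ) + 1) * dist x base - 1 := by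
    gcongr; norm_num
  have hB : 2 - (2:ℝ) ^ (-(m:ℤ)) * dist x base ≤ 2 - (2:ℝ) ^ (-(n:ℤ)) * dist x base := by
    gcongr; norm_num
  exact max_le_max le_rfl (min_le_min le_rfl (min_le_min hA hB))

lemma Pla_eq_one_of_mem_annulus {n : ℕ} {x : M} (h₁ : ((2:ℝ) ^ n)⁻¹ ≤ dist x base)
    (h₂ : dist x base ≤ 2 ^ n) : Pla base n x = 1 := by
  have hpos : (0:ℝ) < 2 ^ n := by positivity
  rw [Pla, zpow_add_one₀ two_ne_zero, zpow_neg, zpow_natCast,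
    min_eq_left (le_min ?_ ?_), max_eq_right zero_le_one]
  · have : 1 ≤ 2 ^ n * dist x base := by rwa [inv_le_iff_one_le_mul₀ hpos, mul_comm] at h₁
    linarith
  · have : ((2:ℝ) ^ n)⁻¹ * dist x base ≤ 1 := by rwa [inv_mul_le_one₀ hpos]
    linarith

lemma eventually_Pla_eq_one {x : M} (hx : x ≠ base) : ∀ᶠ n in atTop, Pla base n x = 1 := by
  have h2n := tendsto_pow_atTop_atTop_of_one_lt (one_lt_two (α := ℝ))
  filter_upwards [h2n.eventually_ge_atTop (dist x base),
    (tendsto_inv_atTop_zero.comp h2n).eventually (eventually_le_nhds (dist_pos.2 hx))] with n h₂ h₁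
  exact Pla_eq_one_of_mem_annulus base h₁ h₂

theorem lipschitzWith_Pla_mul {f : M → ℝ} {K : ℝ≥0} (hf : LipschitzWith K f) (hf0 : f base = 0)
    (n : ℕ) : LipschitzWith (5 * K) fun x => Pla base n x * f x := by
  have hfb : ∀ x, |f x| ≤ K * dist x base := fun x => by
    simpa [Real.dist_eq, hf0] using hf.dist_le_mul x base
  have lip_h : LipschitzWith (K + 2 ^ (-(n:ℤ)) * (K * 2 ^ ((n:ℤ) + 1)))
      fun x => hfun base n x * f x :=
    (lipschitzWith_hfun base n).mul_of_abs_le_off_level 0 (abs_hfun_le_one base n) hf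
      fun x hx => by
        have := dist_lt_of_hfun_ne_zero base hx
        calc |f x| ≤ K * dist x base := hfb x
          _ ≤ _ := by push_cast; gcongr
  have lip_gh : LipschitzWith ((K + 2 ^ (-(n:ℤ)) * (K * 2 ^ ((n:ℤ) + 1))) +
      2 ^ ((n:ℤ) + 1) * (K * 2 ^ (-(n:ℤ))))
      fun x => (1 - hfun base (-((n:ℤ) + 1)) x) * (hfun base n x * f x) := by
    simpa only [neg_neg] using
      (lipschitzWith_one_sub_hfun base (-((n:ℤ) + 1))).mul_of_abs_le_off_level 1
      (abs_one_sub_hfun_le_one base _) lip_h fun x hx => by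
        have := dist_lt_of_hfun_ne_zero base (fun h => hx (by rw [h, sub_zero]))
        rw [show -((n:ℤ) + 1) + 1 = -n by ring] at this
        calc |hfun base n x * f x| ≤ 1 * (K * dist x base) := by
              rw [abs_mul]
              exact mul_le_mul (abs_hfun_le_one base n x) (hfb x) (abs_nonneg _) zero_le_one
          _ ≤ _ := by push_cast; rw [one_mul]; gcongr
  have hconst : (K + 2 ^ (-(n:ℤ)) * (K * 2 ^ ((n:ℤ) + 1))) +
      2 ^ ((n:ℤ) + 1) * (K * 2 ^ (-(n:ℤ))) = 5 * K := by
    have h2 : (2 : ℝ≥0) ^ (-(n:ℤ)) * 2 ^ ((n:ℤ) + 1) = 2 := by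
      rw [← zpow_add₀ two_ne_zero, neg_add_cancel_left, zpow_one]
    calc _ = K + 2 * ((2 ^ (-(n:ℤ)) * 2 ^ ((n:ℤ) + 1)) * K) := by ring
      _ = 5 * K := by rw [h2]; ring
  simpa only [Pla_eq_mul_hfun, mul_assoc, hconst] using lip_gh

end Cutoffs

/-- for `f ∈ Lip₀(M)`, the sequence `(Π_n(x)·f⁺(x))_n` is nondecreasing
and converges to `f⁺(x)` for every `x`, and `Lip(Π_n·f) ≤ 12·Lip(f)`. -/
theorem plateau_truncation (base : M) (f : M → ℝ) (K : ℝ≥0)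
    (hf : LipschitzWith K f) (hf0 : f base = 0) :
    (∀ x, Monotone fun n : ℕ => Pla base n x * max (f x) 0) ∧
    (∀ x, Tendsto (fun n : ℕ => Pla base n x * max (f x) 0) atTop (𝓝 (max (f x) 0))) ∧
    (∀ n : ℕ, LipschitzWith (12 * K) fun x => Pla base n x * f x) := by
  refine ⟨fun x => (monotone_Pla base x).mul_const (le_max_right _ _), fun x => ?_,
    fun n => (lipschitzWith_Pla_mul base hf hf0 n).weaken (by gcongr; norm_num)⟩
  rcases eq_or_ne x base with rfl | hx
  · simp [hf0]
  · exact tendsto_const_nhds.congr'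
      ((eventually_Pla_eq_one base hx).mono fun n hn => by simp [hn])
end

section
/- If φ ∈ F(M)** is a normal functional and h is a non-negative Lipschitz function on M with bounded support, then the functional φ ∘ W_h : f ↦ φ(f·h) is also normal. -/
open Filter Metric Topology NNReal


/-- The set of Lipschitz functions `M → ℝ` vanishing at the base point, as a
submodule of `M → ℝ`. -/
def Lip0Sub (M : Type*) [MetricSpace M] (base : M) : Submodule ℝ (M → ℝ) where
  carrier := {f | (∃ K, LipschitzWith K f) ∧ f base = 0}
  add_mem' := by
    rintro f g ⟨⟨Kf, hf⟩, hf0⟩ ⟨⟨Kg, hg⟩, hg0⟩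
    exact ⟨⟨Kf + Kg, hf.add hg⟩, by simp [Pi.add_apply, hf0, hg0]⟩
  zero_mem' := ⟨⟨0, LipschitzWith.const 0⟩, rfl⟩
  smul_mem' := by
    rintro c f ⟨⟨Kf, hf⟩, hf0⟩
    exact ⟨⟨‖c‖₊ * Kf, (lipschitzWith_smul c).comp hf⟩, by simp [Pi.smul_apply, hf0]⟩

/-- The space `Lip₀(M)` of Lipschitz functions vanishing at the base point.
(A type synonym, so that it carries the Lipschitz-norm topology rather than the
topology of pointwise convergence.) -/
def Lip0 (M : Type*) [MetricSpace M] (base : M) : Type _ := ↥(Lip0Sub M base)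

variable {M : Type*} [MetricSpace M] {base : M}

instance : AddCommGroup (Lip0 M base) :=
  inferInstanceAs (AddCommGroup ↥(Lip0Sub M base))

noncomputable instance : Module ℝ (Lip0 M base) :=
  inferInstanceAs (Module ℝ ↥(Lip0Sub M base))

/-- An element of `Lip₀(M)` is a function on `M`. -/
instance : CoeFun (Lip0 M base) (fun _ => M → ℝ) :=
  ⟨fun f => (Subtype.val f : M → ℝ)⟩

theorem Lip0.prop (f : Lip0 M base) :
    (∃ K, LipschitzWith K (f : M → ℝ)) ∧ (f : M → ℝ) base = 0 :=
  Subtype.prop f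

/-- The quantity defining the Lipschitz norm. -/
noncomputable def Lip0.lipNorm (f : Lip0 M base) : ℝ :=
  ⨆ p : M × M, |f p.1 - f p.2| / dist p.1 p.2

theorem Lip0.ratio_le (f : Lip0 M base) {K : ℝ≥0} (hK : LipschitzWith K (f : M → ℝ))
    (p : M × M) : |f p.1 - f p.2| / dist p.1 p.2 ≤ K := by
  rcases eq_or_ne p.1 p.2 with h | h
  · simp [h, K.coe_nonneg]
  · rw [div_le_iff₀ (dist_pos.2 h)]
    simpa [Real.dist_eq] using hK.dist_le_mul p.1 p.2

theorem Lip0.bddAbove (f : Lip0 M base) :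
    BddAbove (Set.range fun p : M × M => |f p.1 - f p.2| / dist p.1 p.2) := by
  obtain ⟨K, hK⟩ := f.prop.1
  exact ⟨K, by rintro r ⟨p, rfl⟩; exact f.ratio_le hK p⟩

theorem Lip0.ratio_le_lipNorm (f : Lip0 M base) (p : M × M) :
    |f p.1 - f p.2| / dist p.1 p.2 ≤ f.lipNorm :=
  le_ciSup f.bddAbove p

theorem Lip0.lipNorm_nonneg (f : Lip0 M base) : 0 ≤ f.lipNorm := by
  have := f.ratio_le_lipNorm (base, base)
  simpa using this

/-- The Lipschitz norm on `Lip₀(M)`: the best Lipschitz constant,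
`‖f‖ = sup_{x ≠ y} |f x - f y| / d(x,y)`. -/
noncomputable instance Lip0.normedAddCommGroup :
    NormedAddCommGroup (Lip0 M base) :=
  AddGroupNorm.toNormedAddCommGroup
    { toFun := fun f => f.lipNorm
      map_zero' := by
        have h : ∀ p : M × M,
            |(0 : Lip0 M base) p.1 - (0 : Lip0 M base) p.2| / dist p.1 p.2 = 0 := by
          intro p
          show |(0:ℝ) - 0| / _ = 0
          simp
        haveI : Nonempty (M × M) := ⟨(base, base)⟩
        simp only [Lip0.lipNorm, h, ciSup_const]
      add_le' := by
        intro f g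
        haveI : Nonempty (M × M) := ⟨(base, base)⟩
        apply ciSup_le
        intro p
        rcases eq_or_ne p.1 p.2 with h | h
        · have : dist p.1 p.2 = 0 := by simp [h]
          rw [this, div_zero]
          exact add_nonneg f.lipNorm_nonneg g.lipNorm_nonneg
        · have hd : (0:ℝ) < dist p.1 p.2 := dist_pos.2 h
          have h1 : |(f + g) p.1 - (f + g) p.2| ≤ |f p.1 - f p.2| + |g p.1 - g p.2| := by
            show |(f p.1 + g p.1) - (f p.2 + g p.2)| ≤ _
            rw [add_sub_add_comm]
            exact abs_add_le _ _
          calc |(f + g) p.1 - (f + g) p.2| / dist p.1 p.2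
              ≤ (|f p.1 - f p.2| + |g p.1 - g p.2|) / dist p.1 p.2 := by gcongr
            _ ≤ f.lipNorm + g.lipNorm := by
                rw [add_div]
                exact add_le_add (f.ratio_le_lipNorm p) (g.ratio_le_lipNorm p)
      neg' := by
        intro f
        show Lip0.lipNorm _ = Lip0.lipNorm _
        unfold Lip0.lipNorm
        congr 1
        funext p
        show |(- f p.1) - (- f p.2)| / _ = _
        rw [neg_sub_neg, abs_sub_comm]
      eq_zero_of_map_eq_zero' := by
        intro f hf
        have hconst : ∀ x y : M, f x = f y := by
          intro x y
          rcases eq_or_ne x y with h | h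
          · rw [h]
          · have h1 : |f x - f y| / dist x y ≤ 0 := hf ▸ f.ratio_le_lipNorm (x, y)
            have h2 : (0:ℝ) ≤ |f x - f y| / dist x y :=
              div_nonneg (abs_nonneg _) dist_nonneg
            rcases div_eq_zero_iff.1 (le_antisymm h1 h2) with h3 | h3
            · exact sub_eq_zero.1 (abs_eq_zero.1 h3)
            · exact absurd h3 (dist_ne_zero.2 h)
        have hzero : ∀ x, f x = 0 := fun x => (hconst x base).trans f.prop.2
        exact Subtype.ext (funext hzero) }

noncomputable instance Lip0.normedSpace : NormedSpace ℝ (Lip0 M base) :=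
  { norm_smul_le := by
      intro c f
      haveI : Nonempty (M × M) := ⟨(base, base)⟩
      apply ciSup_le
      intro p
      have heq : |(c • f) p.1 - (c • f) p.2| / dist p.1 p.2
          = |c| * (|f p.1 - f p.2| / dist p.1 p.2) := by
        show |c * f p.1 - c * f p.2| / dist p.1 p.2 = _
        rw [← mul_sub, abs_mul, mul_div_assoc]
      rw [heq]
      calc |c| * (|f p.1 - f p.2| / dist p.1 p.2)
          ≤ |c| * f.lipNorm :=
            mul_le_mul_of_nonneg_left (f.ratio_le_lipNorm p) (abs_nonneg c)
        _ = ‖c‖ * ‖f‖ := rfl }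

/-- Evaluation functional `δ(x) ∈ Lip₀(M)*`. -/
noncomputable def deltaF (base : M) (x : M) : StrongDual ℝ (Lip0 M base) :=
  LinearMap.mkContinuous
    { toFun := fun f => f x
      map_add' := fun _ _ => rfl
      map_smul' := fun _ _ => rfl }
    (dist x base)
    (by
      intro f
      show |f x| ≤ dist x base * ‖f‖
      rcases eq_or_ne x base with h | h
      · simp [h, f.prop.2, mul_nonneg dist_nonneg f.lipNorm_nonneg]
      · have h1 : |f x - f base| / dist x base ≤ ‖f‖ := f.ratio_le_lipNorm (x, base)
        have h2 : |f x - f base| ≤ dist x base * ‖f‖ := by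
          rw [div_le_iff₀ (dist_pos.2 (by simpa using h))] at h1
          linarith [h1]
        simpa [f.prop.2] using h2)

/-- The Lipschitz-free space `F(M)`, realized as the closed linear span of the
evaluation functionals inside `Lip₀(M)*`. -/
noncomputable def FreeSpace (base : M) : Set (StrongDual ℝ (Lip0 M base)) :=
  closure ((Submodule.span ℝ (Set.range (deltaF base)) :
    Submodule ℝ (StrongDual ℝ (Lip0 M base))) : Set (StrongDual ℝ (Lip0 M base)))

/-- A functional `φ ∈ Lip₀(M)* = F(M)**` is *normal* if for every norm-bounded net
converging pointwise and monotonically to `f ∈ Lip₀(M)`, the values `φ(fᵢ)` converge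
to `φ(f)`. -/
def IsNormal (base : M) (φ : StrongDual ℝ (Lip0 M base)) : Prop :=
  ∀ (ι : Type) [Preorder ι] [Nonempty ι] [IsDirected ι (· ≤ ·)]
    (F : ι → Lip0 M base) (f : Lip0 M base) (C : ℝ),
    (∀ i, ‖F i‖ ≤ C) →
    ((∀ x, Monotone fun i => (F i) x) ∨ (∀ x, Antitone fun i => (F i) x)) →
    (∀ x, Tendsto (fun i => (F i) x) atTop (𝓝 (f x))) →
    Tendsto (fun i => φ (F i)) atTop (𝓝 (φ f))

theorem IsNormal.comp_of_pointwise_monotone {φ : StrongDual ℝ (Lip0 M base)}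
    (hφ : IsNormal base φ) (T : Lip0 M base →L[ℝ] Lip0 M base) (g : M → ℝ → ℝ)
    (hg_mono : ∀ x, Monotone (g x)) (hg_cont : ∀ x, Continuous (g x))
    (hT : ∀ f x, T f x = g x (f x)) :
    IsNormal base (φ.comp T) := by
  intro ι _ _ _ F f C hC hF_mono hF_lim
  refine hφ ι (fun i => T (F i)) (T f) (‖T‖ * C)
    (fun i => T.le_of_opNorm_le_of_le le_rfl (hC i)) ?_ ?_
  · simp only [hT]
    exact hF_mono.imp (fun hm x => (hg_mono x).comp (hm x))
      (fun hm x => (hg_mono x).comp_antitone (hm x))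
  · simp only [hT]
    exact fun x => ((hg_cont x).tendsto _).comp (hF_lim x)

theorem normal_comp_weighting_general (base : M)
    (φ : StrongDual ℝ (Lip0 M base)) (hφ : IsNormal base φ)
    (h : M → ℝ) (hpos : ∀ x, 0 ≤ h x)
    (W : Lip0 M base →L[ℝ] Lip0 M base)
    (hW : ∀ (f : Lip0 M base) (x : M), (W f) x = f x * h x) :
    IsNormal base (φ.comp W) :=
  hφ.comp_of_pointwise_monotone W (fun x t => t * h x)
    (fun x => monotone_mul_right_of_nonneg (hpos x)) (fun x => continuous_mul_const (h x)) hW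

/-- if `φ` is normal and `h ≥ 0` is Lipschitz with bounded support, then
`φ ∘ W_h : f ↦ φ(f·h)` is normal. -/
theorem normal_comp_weighting [CompleteSpace M] (base : M)
    (φ : StrongDual ℝ (Lip0 M base)) (hφ : IsNormal base φ)
    (h : M → ℝ) (K : ℝ≥0) (hh : LipschitzWith K h) (hpos : ∀ x, 0 ≤ h x)
    (R : ℝ) (hsupp : ∀ x, h x ≠ 0 → dist x base ≤ R)
    (W : Lip0 M base →L[ℝ] Lip0 M base)
    (hW : ∀ (f : Lip0 M base) (x : M), (W f) x = f x * h x) :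
    IsNormal base (φ.comp W) :=
  normal_comp_weighting_general base φ hφ h hpos W hW
end
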